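/- Let V = ℝ⁶ with standard basis e₁, …, e₆ and dual basis e₁*, …, e₆*. Fix real numbers c₂, d₁, d₂, d₃, and define the 1-form σ = e₄* + c₂·e₂* and the 2-form ψ = e₅* ∧ e₂* + e₆* ∧ e₃* on V. Let E = span{e₁, e₂ + d₁·e₄ + d₂·e₅ + d₃·e₆, e₃}, a 3-dimensional subspace of V. Then every 3-form on V of the shape β ∧ σ + α ∧ ψ, where β is an arbitrary 2-form and α is an arbitrary 1-form on V, vanishes on E if and only if d₁ = −c₂ and d₃ = 0. -/

import Mathlib

/-!
A wedge product vanishes on `E` as soon as its second factor does, since every term of its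
alternating sum contains that factor evaluated on vectors of `E`. On `E` the coordinates satisfy
`x₄ = d₁ x₂`, `x₅ = d₂ x₂`, `x₆ = d₃ x₂`, so `σ|_E = (d₁ + c₂) e₂*` and `ψ|_E = d₃ e₂* ∧ e₃*`:
both vanish when `d₁ = -c₂` and `d₃ = 0`. Conversely, on the spanning frame of `E` the forms
`(e₁* ∧ e₃*) ∧ σ` and `e₁* ∧ ψ` take the values `-(d₁ + c₂)` and `d₃`.
-/

/-- The wedge product of two real-valued alternating forms, as the usual exterior
product of alternating forms. -/
noncomputable def wedge {V : Type*} [AddCommGroup V] [Module ℝ V] {m l : ℕ}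
    (η : V [⋀^Fin m]→ₗ[ℝ] ℝ) (θ : V [⋀^Fin l]→ₗ[ℝ] ℝ) : V [⋀^Fin (m + l)]→ₗ[ℝ] ℝ :=
  ((TensorProduct.lid ℝ ℝ).toLinearMap.compAlternatingMap (η.domCoprod θ)).domDomCongr
    finSumFinEquiv

/-- A form vanishes on a subspace `E` if it is zero on every tuple of vectors of `E`. -/
def VanishesOn {V : Type*} [AddCommGroup V] [Module ℝ V] {ι : Type*}
    (θ : V [⋀^ι]→ₗ[ℝ] ℝ) (E : Submodule ℝ V) : Prop :=
  ∀ v : ι → V, (∀ i, v i ∈ E) → θ v = 0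


/-- A linear functional regarded as an alternating `1`-form. -/
noncomputable def oneForm {V : Type*} [AddCommGroup V] [Module ℝ V]
    (f : V →ₗ[ℝ] ℝ) : V [⋀^Fin 1]→ₗ[ℝ] ℝ :=
  AlternatingMap.ofSubsingleton ℝ V ℝ 0 f

/-- The 1-form `σ = e₄* + c₂·e₂*` on `ℝ⁶`. -/
noncomputable def sigma9 (c₂ : ℝ) : (Fin 6 → ℝ) [⋀^Fin 1]→ₗ[ℝ] ℝ :=
  oneForm (LinearMap.proj 3 + c₂ • LinearMap.proj 1)

/-- The 2-form `ψ = e₅* ∧ e₂* + e₆* ∧ e₃*` on `ℝ⁶`. -/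
noncomputable def psi9 : (Fin 6 → ℝ) [⋀^Fin 2]→ₗ[ℝ] ℝ :=
  wedge (oneForm (LinearMap.proj 4)) (oneForm (LinearMap.proj 1)) +
    wedge (oneForm (LinearMap.proj 5)) (oneForm (LinearMap.proj 2))

/-- The standard basis vector `eᵢ` of `ℝ⁶`. -/
def stdBasis6 (i : Fin 6) : Fin 6 → ℝ := Pi.single i 1

/-- The subspace `E = span {e₁, e₂ + d₁·e₄ + d₂·e₅ + d₃·e₆, e₃}` of `ℝ⁶`. -/
def E9 (d₁ d₂ d₃ : ℝ) : Submodule ℝ (Fin 6 → ℝ) :=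
  Submodule.span ℝ
    {stdBasis6 0,
      stdBasis6 1 + d₁ • stdBasis6 3 + d₂ • stdBasis6 4 + d₃ • stdBasis6 5,
      stdBasis6 2}

open Equiv

section Wedge

variable {V : Type*} [AddCommGroup V] [Module ℝ V]

theorem factorial_mul_factorial_smul_wedge_apply {m l : ℕ} (η : V [⋀^Fin m]→ₗ[ℝ] ℝ)
    (θ : V [⋀^Fin l]→ₗ[ℝ] ℝ) (u : Fin (m + l) → V) :
    (m.factorial * l.factorial) • wedge η θ u =
      ∑ σ : Perm (Fin m ⊕ Fin l), Perm.sign σ •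
        (η (fun i => u (finSumFinEquiv (σ (Sum.inl i)))) *
          θ (fun i => u (finSumFinEquiv (σ (Sum.inr i))))) := by
  have h := DFunLike.congr_fun (MultilinearMap.domCoprod_alternization_eq η θ)
    (fun p => u (finSumFinEquiv p))
  rw [MultilinearMap.alternatization_apply, AlternatingMap.smul_apply] at h
  have h' := congrArg (TensorProduct.lid ℝ ℝ) h
  rw [map_sum, map_nsmul] at h'
  simp only [Fintype.card_fin] at h'
  change _ • TensorProduct.lid ℝ ℝ ((η.domCoprod θ) (fun p => u (finSumFinEquiv p))) = _
  rw [← h']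
  refine Finset.sum_congr rfl fun σ _ => ?_
  rw [Units.smul_def, map_zsmul, MultilinearMap.domDomCongr_apply,
    MultilinearMap.domCoprod_apply, TensorProduct.lid_tmul, smul_eq_mul]
  rfl

theorem VanishesOn.wedge_right {m l : ℕ} {θ : V [⋀^Fin l]→ₗ[ℝ] ℝ} {E : Submodule ℝ V}
    (hθ : VanishesOn θ E) (η : V [⋀^Fin m]→ₗ[ℝ] ℝ) : VanishesOn (wedge η θ) E := by
  intro u hu
  have h := factorial_mul_factorial_smul_wedge_apply η θ u
  rw [Finset.sum_eq_zero fun σ _ => by rw [hθ _ fun i => hu _, mul_zero, smul_zero]] at h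
  exact (smul_eq_zero.mp h).resolve_left (by positivity)

theorem VanishesOn.add {ι : Type*} {θ θ' : V [⋀^ι]→ₗ[ℝ] ℝ} {E : Submodule ℝ V}
    (hθ : VanishesOn θ E) (hθ' : VanishesOn θ' E) : VanishesOn (θ + θ') E := fun u hu => by
  rw [AlternatingMap.add_apply, hθ u hu, hθ' u hu, add_zero]

theorem AlternatingMap.apply_vecCons_swap {R M N : Type*} [CommRing R] [AddCommGroup M]
    [Module R M] [AddCommGroup N] [Module R N] (η : M [⋀^Fin 2]→ₗ[R] N) (x y : M) :
    η ![y, x] = -η ![x, y] := by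
  rw [← η.map_swap ![x, y] (i := 0) (j := 1) (by decide)]
  congr 1
  ext j
  fin_cases j <;> rfl

theorem wedge_one_one_apply (f g : V [⋀^Fin 1]→ₗ[ℝ] ℝ) (u : Fin 2 → V) :
    wedge f g u = f ![u 0] * g ![u 1] - f ![u 1] * g ![u 0] := by
  have h := factorial_mul_factorial_smul_wedge_apply f g u
  rw [← Fintype.sum_bijective ![1, swap (.inl 0) (.inr 0)] (by decide) _ _ fun _ => rfl,
    Fin.sum_univ_two] at h
  -- Opaque functions of the entries let `simp` evaluate the permuted tuples entrywise.
  obtain ⟨f', hf⟩ : ∃ f' : V → ℝ, ∀ v, f v = f' (v 0) :=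
    ⟨fun x => f ![x], fun v => congrArg f (by ext i; fin_cases i; rfl)⟩
  obtain ⟨g', hg⟩ : ∃ g' : V → ℝ, ∀ v, g v = g' (v 0) :=
    ⟨fun x => g ![x], fun v => congrArg g (by ext i; fin_cases i; rfl)⟩
  simp only [hf, hg] at h ⊢
  simp only [Nat.factorial_one, mul_one, Nat.reduceAdd, one_smul, Nat.succ_eq_add_one,
    Fin.isValue, Matrix.cons_val_zero, Perm.sign_one, Perm.coe_one, id_eq, Matrix.cons_val_one,
    Matrix.cons_val_fin_one, Perm.sign_swap', reduceCtorEq, ↓reduceIte, swap_apply_left,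
    swap_apply_right, Units.neg_smul] at h
  have h0 : finSumFinEquiv (.inl 0 : Fin 1 ⊕ Fin 1) = 0 := rfl
  have h1 : finSumFinEquiv (.inr 0 : Fin 1 ⊕ Fin 1) = 1 := rfl
  simp only [Matrix.cons_val_zero]
  rw [h0, h1] at h
  linarith

theorem wedge_one_two_apply (α : V [⋀^Fin 1]→ₗ[ℝ] ℝ) (ψ : V [⋀^Fin 2]→ₗ[ℝ] ℝ) (u : Fin 3 → V) :
    wedge α ψ u = α ![u 0] * ψ ![u 1, u 2] - α ![u 1] * ψ ![u 0, u 2]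
      + α ![u 2] * ψ ![u 0, u 1] := by
  have h := factorial_mul_factorial_smul_wedge_apply α ψ u
  rw [← Fintype.sum_bijective (![1, swap (.inl 0) (.inr 0), swap (.inl 0) (.inr 1),
    swap (.inr 0) (.inr 1), swap (.inl 0) (.inr 0) * swap (.inr 0) (.inr 1),
    swap (.inr 0) (.inr 1) * swap (.inl 0) (.inr 0)] : Fin 6 → Perm (Fin 1 ⊕ Fin 2))
    (by decide) _ _ fun _ => rfl, Fin.sum_univ_six] at h
  obtain ⟨g, hα⟩ : ∃ g : V → ℝ, ∀ v, α v = g (v 0) :=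
    ⟨fun x => α ![x], fun v => congrArg α (by ext i; fin_cases i; rfl)⟩
  obtain ⟨f, hψ⟩ : ∃ f : V → V → ℝ, ∀ v, ψ v = f (v 0) (v 1) :=
    ⟨fun x y => ψ ![x, y], fun v => congrArg ψ (by ext i; fin_cases i <;> rfl)⟩
  have hanti : ∀ x y, f y x = -f x y := fun x y => by
    simpa [hψ] using ψ.apply_vecCons_swap x y
  simp only [hα, hψ] at h ⊢
  simp only [Nat.factorial_one, Nat.factorial_two, one_mul, Nat.reduceAdd, nsmul_eq_mul,
    Nat.cast_ofNat, Fin.isValue, Matrix.cons_val_zero, Perm.sign_one, Perm.coe_one, id_eq, one_smul,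
    Matrix.cons_val_one, Perm.sign_swap', reduceCtorEq, ↓reduceIte, swap_apply_left,
    swap_apply_right, swap_apply_def, Sum.inr.injEq, one_ne_zero, Units.neg_smul, Matrix.cons_val,
    zero_ne_one, Perm.sign_mul, mul_neg, mul_one, neg_neg, Perm.coe_mul, Function.comp_apply] at h
  simp only [Matrix.cons_val_zero, Matrix.cons_val_one]
  have h0 : finSumFinEquiv (.inl 0 : Fin 1 ⊕ Fin 2) = 0 := rfl
  have h1 : finSumFinEquiv (.inr 0 : Fin 1 ⊕ Fin 2) = 1 := rfl
  have h2 : finSumFinEquiv (.inr 1 : Fin 1 ⊕ Fin 2) = 2 := rfl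
  rw [h0, h1, h2] at h
  rw [hanti (u 0) (u 1), hanti (u 1) (u 2), hanti (u 0) (u 2)] at h
  linarith

theorem wedge_two_one_apply (η : V [⋀^Fin 2]→ₗ[ℝ] ℝ) (θ : V [⋀^Fin 1]→ₗ[ℝ] ℝ) (u : Fin 3 → V) :
    wedge η θ u = η ![u 0, u 1] * θ ![u 2] - η ![u 0, u 2] * θ ![u 1]
      + η ![u 1, u 2] * θ ![u 0] := by
  have h := factorial_mul_factorial_smul_wedge_apply η θ u
  rw [← Fintype.sum_bijective (![1, swap (.inl 0) (.inl 1), swap (.inl 0) (.inr 0),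
    swap (.inl 1) (.inr 0), swap (.inl 0) (.inl 1) * swap (.inl 1) (.inr 0),
    swap (.inl 1) (.inr 0) * swap (.inl 0) (.inl 1)] : Fin 6 → Perm (Fin 2 ⊕ Fin 1))
    (by decide) _ _ fun _ => rfl, Fin.sum_univ_six] at h
  obtain ⟨f, hη⟩ : ∃ f : V → V → ℝ, ∀ v, η v = f (v 0) (v 1) :=
    ⟨fun x y => η ![x, y], fun v => congrArg η (by ext i; fin_cases i <;> rfl)⟩
  obtain ⟨g, hθ⟩ : ∃ g : V → ℝ, ∀ v, θ v = g (v 0) :=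
    ⟨fun x => θ ![x], fun v => congrArg θ (by ext i; fin_cases i; rfl)⟩
  have hanti : ∀ x y, f y x = -f x y := fun x y => by
    simpa [hη] using η.apply_vecCons_swap x y
  simp only [hη, hθ] at h ⊢
  simp only [Nat.factorial_two, Nat.factorial_one, mul_one, Nat.reduceAdd, nsmul_eq_mul,
    Nat.cast_ofNat, Fin.isValue, Matrix.cons_val_zero, Perm.sign_one, Perm.coe_one, id_eq, one_smul,
    Matrix.cons_val_one, Perm.sign_swap', Sum.inl.injEq, zero_ne_one, ↓reduceIte, swap_apply_left,
    swap_apply_right, swap_apply_def, reduceCtorEq, Units.neg_smul, Matrix.cons_val, one_ne_zero,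
    Perm.sign_mul, mul_neg, neg_neg, Perm.coe_mul, Function.comp_apply] at h
  simp only [Matrix.cons_val_zero, Matrix.cons_val_one]
  have h0 : finSumFinEquiv (.inl 0 : Fin 2 ⊕ Fin 1) = 0 := rfl
  have h1 : finSumFinEquiv (.inl 1 : Fin 2 ⊕ Fin 1) = 1 := rfl
  have h2 : finSumFinEquiv (.inr 0 : Fin 2 ⊕ Fin 1) = 2 := rfl
  rw [h0, h1, h2] at h
  rw [hanti (u 0) (u 1), hanti (u 1) (u 2), hanti (u 0) (u 2)] at h
  linarith

end Wedge

section IdealE9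

variable (c₂ d₁ d₂ d₃ : ℝ)

theorem sigma9_apply (x : Fin 6 → ℝ) : sigma9 c₂ ![x] = x 3 + c₂ * x 1 := by
  simp [sigma9, oneForm]

theorem psi9_apply (x y : Fin 6 → ℝ) :
    psi9 ![x, y] = x 4 * y 1 - y 4 * x 1 + (x 5 * y 2 - y 5 * x 2) := by
  simp [psi9, wedge_one_one_apply, oneForm]

variable {c₂ d₁ d₂ d₃} in
theorem apply_eq_mul_of_mem_E9 {x : Fin 6 → ℝ} (hx : x ∈ E9 d₁ d₂ d₃) :
    x 3 = d₁ * x 1 ∧ x 4 = d₂ * x 1 ∧ x 5 = d₃ * x 1 := by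
  induction hx using Submodule.span_induction with
  | mem x hx =>
    rcases hx with rfl | rfl | rfl <;> simp [stdBasis6]
  | zero => simp
  | add x y _ _ hx hy =>
    simp only [Pi.add_apply, hx.1, hx.2.1, hx.2.2, hy.1, hy.2.1, hy.2.2]
    refine ⟨?_, ?_, ?_⟩ <;> ring
  | smul a x _ hx =>
    simp only [Pi.smul_apply, smul_eq_mul, hx.1, hx.2.1, hx.2.2]
    refine ⟨?_, ?_, ?_⟩ <;> ring

theorem sigma9_vanishesOn_E9 : VanishesOn (sigma9 c₂) (E9 (-c₂) d₂ d₃) := fun u hu => by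
  rw [show u = ![u 0] from by ext i; fin_cases i; rfl, sigma9_apply,
    (apply_eq_mul_of_mem_E9 (hu 0)).1]
  ring

theorem psi9_vanishesOn_E9 : VanishesOn psi9 (E9 d₁ d₂ 0) := fun u hu => by
  obtain ⟨-, h₀, h₀'⟩ := apply_eq_mul_of_mem_E9 (hu 0)
  obtain ⟨-, h₁, h₁'⟩ := apply_eq_mul_of_mem_E9 (hu 1)
  rw [show u = ![u 0, u 1] from by ext i; fin_cases i <;> rfl, psi9_apply]
  simp only [h₀, h₀', h₁, h₁']
  ring

def e9Frame : Fin 3 → Fin 6 → ℝ :=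
  ![stdBasis6 0, stdBasis6 1 + d₁ • stdBasis6 3 + d₂ • stdBasis6 4 + d₃ • stdBasis6 5,
    stdBasis6 2]

theorem span_range_e9Frame : Submodule.span ℝ (Set.range (e9Frame d₁ d₂ d₃)) = E9 d₁ d₂ d₃ := by
  simp only [e9Frame, E9, Matrix.range_cons, Matrix.range_empty, Set.union_empty,
    Set.singleton_union]

theorem e9Frame_mem (i : Fin 3) : e9Frame d₁ d₂ d₃ i ∈ E9 d₁ d₂ d₃ :=
  span_range_e9Frame d₁ d₂ d₃ ▸ Submodule.subset_span ⟨i, rfl⟩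

theorem linearIndependent_e9Frame : LinearIndependent ℝ (e9Frame d₁ d₂ d₃) := by
  rw [Fintype.linearIndependent_iff]
  intro g hg i
  have hgi := congrFun hg (Fin.castAdd 3 i)
  fin_cases i <;> simpa [Fin.sum_univ_three, e9Frame, stdBasis6] using hgi

theorem finrank_E9 : Module.finrank ℝ (E9 d₁ d₂ d₃) = 3 := by
  rw [← span_range_e9Frame, finrank_span_eq_card (linearIndependent_e9Frame d₁ d₂ d₃),
    Fintype.card_fin]

theorem wedge_sigma9_add_wedge_psi9_apply_e9Frame (β : (Fin 6 → ℝ) [⋀^Fin 2]→ₗ[ℝ] ℝ)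
    (α : (Fin 6 → ℝ) [⋀^Fin 1]→ₗ[ℝ] ℝ) :
    (wedge β (sigma9 c₂) + wedge α psi9) (e9Frame d₁ d₂ d₃) =
      α ![stdBasis6 0] * d₃ - β ![stdBasis6 0, stdBasis6 2] * (d₁ + c₂) := by
  rw [AlternatingMap.add_apply, wedge_two_one_apply, wedge_one_two_apply]
  simp [e9Frame, sigma9_apply, psi9_apply, stdBasis6, neg_add_eq_sub]

end IdealE9

/-- Section 7 of the paper: `E` is a 3-dimensional subspace of `ℝ⁶`, and every `3`-form
of the shape `β ∧ σ + α ∧ ψ` vanishes on `E` iff `d₁ = −c₂` and `d₃ = 0`. -/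
theorem integral_element_invariant_inverse_problem (c₂ d₁ d₂ d₃ : ℝ) :
    Module.finrank ℝ (E9 d₁ d₂ d₃) = 3 ∧
    ((∀ (β : (Fin 6 → ℝ) [⋀^Fin 2]→ₗ[ℝ] ℝ) (α : (Fin 6 → ℝ) [⋀^Fin 1]→ₗ[ℝ] ℝ),
        VanishesOn (wedge β (sigma9 c₂) + wedge α psi9) (E9 d₁ d₂ d₃)) ↔
      (d₁ = -c₂ ∧ d₃ = 0)) := by
  refine ⟨finrank_E9 d₁ d₂ d₃, ⟨fun h => ⟨?_, ?_⟩, ?_⟩⟩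
  · have h₁ := h (wedge (oneForm (LinearMap.proj 0)) (oneForm (LinearMap.proj 2))) 0 _
      (e9Frame_mem d₁ d₂ d₃)
    rw [wedge_sigma9_add_wedge_psi9_apply_e9Frame, wedge_one_one_apply] at h₁
    rw [eq_neg_iff_add_eq_zero]
    simpa [oneForm, stdBasis6, -neg_add_rev] using h₁
  · have h₂ := h 0 (oneForm (LinearMap.proj 0)) _ (e9Frame_mem d₁ d₂ d₃)
    rw [wedge_sigma9_add_wedge_psi9_apply_e9Frame] at h₂
    simpa [oneForm, stdBasis6] using h₂
  · rintro ⟨rfl, rfl⟩ β α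
    exact ((sigma9_vanishesOn_E9 c₂ d₂ 0).wedge_right β).add
      ((psi9_vanishesOn_E9 _ d₂).wedge_right α)
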